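/- arXiv:2506.20492 — 5 statements merged into one kernel-verified Lean document; each statement's English description precedes it below -/
import Mathlib

section
/- Let B be a bounded, self-adjoint, positive linear operator on a real Hilbert space H and let μ ∈ (0, 1/2]. Define Θ : H → H by Θ(z) = ⟨Bz, z⟩^{−μ} · Bz when Bz ≠ 0 and Θ(z) = 0 when Bz = 0. Then Θ is monotone: ⟨Θ(x) − Θ(y), x − y⟩ ≥ 0 for all x, y ∈ H. -/
open RealInnerProductSpace

lemma theta_key (a b c μ : ℝ) (ha : 0 < a) (hb : 0 < b)
    (hμ1 : 0 < μ) (hμ2 : μ ≤ 1/2) (hc : c^2 ≤ a*b) :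
    0 ≤ a^(-μ)*(a - c) + b^(-μ)*(b - c) := by
  have hsa : (0:ℝ) < a ^ ((1:ℝ)/2) := Real.rpow_pos_of_pos ha _
  have hsb : (0:ℝ) < b ^ ((1:ℝ)/2) := Real.rpow_pos_of_pos hb _
  have hpa : (0:ℝ) < a ^ (-μ) := Real.rpow_pos_of_pos ha _
  have hpb : (0:ℝ) < b ^ (-μ) := Real.rpow_pos_of_pos hb _
  have hua : (0:ℝ) < a ^ ((1:ℝ)/2 - μ) := Real.rpow_pos_of_pos ha _
  have hub : (0:ℝ) < b ^ ((1:ℝ)/2 - μ) := Real.rpow_pos_of_pos hb _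
  have hcle : c ≤ a ^ ((1:ℝ)/2) * b ^ ((1:ℝ)/2) := by
    have h1 : c ≤ |c| := le_abs_self c
    have h2 : |c| = Real.sqrt (c^2) := (Real.sqrt_sq_eq_abs c).symm
    have h3 : Real.sqrt (c^2) ≤ Real.sqrt (a*b) := Real.sqrt_le_sqrt hc
    have h4 : Real.sqrt (a*b) = a ^ ((1:ℝ)/2) * b ^ ((1:ℝ)/2) := by
      rw [Real.sqrt_eq_rpow, Real.mul_rpow ha.le hb.le]
    linarith
  have ida : a ^ (-μ) * a = a ^ ((1:ℝ)/2 - μ) * a ^ ((1:ℝ)/2) := by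
    rw [← Real.rpow_add ha]
    nth_rewrite 2 [← Real.rpow_one a]
    rw [← Real.rpow_add ha]
    ring_nf
  have idb : b ^ (-μ) * b = b ^ ((1:ℝ)/2 - μ) * b ^ ((1:ℝ)/2) := by
    rw [← Real.rpow_add hb]
    nth_rewrite 2 [← Real.rpow_one b]
    rw [← Real.rpow_add hb]
    ring_nf
  have ida2 : a ^ (-μ) * a ^ ((1:ℝ)/2) = a ^ ((1:ℝ)/2 - μ) := by
    rw [← Real.rpow_add ha]; ring_nf
  have idb2 : b ^ (-μ) * b ^ ((1:ℝ)/2) = b ^ ((1:ℝ)/2 - μ) := by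
    rw [← Real.rpow_add hb]; ring_nf
  have hprod : 0 ≤ (a ^ ((1:ℝ)/2 - μ) - b ^ ((1:ℝ)/2 - μ)) * (a ^ ((1:ℝ)/2) - b ^ ((1:ℝ)/2)) := by
    rcases le_total a b with hab | hab
    · have h1 : a ^ ((1:ℝ)/2 - μ) ≤ b ^ ((1:ℝ)/2 - μ) :=
        Real.rpow_le_rpow ha.le hab (by linarith)
      have h2 : a ^ ((1:ℝ)/2) ≤ b ^ ((1:ℝ)/2) :=
        Real.rpow_le_rpow ha.le hab (by norm_num)
      nlinarith
    · have h1 : b ^ ((1:ℝ)/2 - μ) ≤ a ^ ((1:ℝ)/2 - μ) :=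
        Real.rpow_le_rpow hb.le hab (by linarith)
      have h2 : b ^ ((1:ℝ)/2) ≤ a ^ ((1:ℝ)/2) :=
        Real.rpow_le_rpow hb.le hab (by norm_num)
      nlinarith
  have hcmul : c * (a ^ (-μ) + b ^ (-μ)) ≤
      a ^ ((1:ℝ)/2) * b ^ ((1:ℝ)/2) * (a ^ (-μ) + b ^ (-μ)) := by
    apply mul_le_mul_of_nonneg_right hcle (by positivity)
  nlinarith [hprod, hcmul, ida, idb, ida2, idb2]

/-- For a bounded, self-adjoint, positive operator `B` and `μ ∈ (0, 1/2]`,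
the map `Θ(z) = ⟨Bz, z⟩^(-μ) • Bz` (with `Θ(z) = 0` when `Bz = 0`) is monotone. -/
theorem theta_monotone
    {H : Type*} [NormedAddCommGroup H] [InnerProductSpace ℝ H]
    (B : H →L[ℝ] H)
    (hBsa : ∀ x y : H, ⟪B x, y⟫ = ⟪x, B y⟫)
    (hBpos : ∀ x : H, 0 ≤ ⟪B x, x⟫)
    (μ : ℝ) (hμ : μ ∈ Set.Ioc (0:ℝ) (1/2))
    (Θ : H → H)
    (hΘ : ∀ z : H, B z ≠ 0 → Θ z = ((⟪B z, z⟫ : ℝ) ^ (-μ)) • B z)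
    (hΘ0 : ∀ z : H, B z = 0 → Θ z = 0) :
    ∀ x y : H, 0 ≤ ⟪Θ x - Θ y, x - y⟫ := by
  obtain ⟨hμ1, hμ2⟩ := hμ
  -- Cauchy-Schwarz for the semi-inner product ⟪B·,·⟫
  have CS : ∀ x y : H, ⟪B x, y⟫^2 ≤ ⟪B x, x⟫ * ⟪B y, y⟫ := by
    intro x y
    have hyx : ⟪B y, x⟫ = ⟪B x, y⟫ := by rw [hBsa y x, real_inner_comm]
    have hq : ∀ t : ℝ, 0 ≤ ⟪B y, y⟫ * (t*t) + (2*⟪B x, y⟫) * t + ⟪B x, x⟫ := by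
      intro t
      have h := hBpos (x + t • y)
      have expand : ⟪B (x + t • y), x + t • y⟫
          = ⟪B y, y⟫ * (t*t) + (2*⟪B x, y⟫) * t + ⟪B x, x⟫ := by
        simp only [map_add, map_smul, inner_add_left, inner_add_right,
          inner_smul_left, inner_smul_right, RCLike.star_def, conj_trivial]
        rw [hyx]; ring
      rw [expand] at h; linarith
    have hd := discrim_le_zero hq
    rw [discrim] at hd
    nlinarith
  have hpos : ∀ z : H, B z ≠ 0 → 0 < ⟪B z, z⟫ := by
    intro z hz
    have h1 := CS z (B z)
    have h2 : (0:ℝ) < ⟪B z, B z⟫ := by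
      have hn : (0:ℝ) < ‖B z‖ := norm_pos_iff.2 hz
      rw [real_inner_self_eq_norm_mul_norm]
      exact mul_pos hn hn
    have h3 := hBpos z
    have h4 := hBpos (B z)
    rcases h3.lt_or_eq with h | h
    · exact h
    · exfalso; nlinarith
  intro x y
  by_cases hx : B x = 0 <;> by_cases hy : B y = 0
  · simp [hΘ0 x hx, hΘ0 y hy]
  · -- B x = 0, B y ≠ 0
    have hxy : ⟪B y, x⟫ = 0 := by rw [hBsa y x, hx, inner_zero_right]
    have hb := hpos y hy
    rw [hΘ0 x hx, hΘ y hy, zero_sub, inner_neg_left, inner_smul_left,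
      inner_sub_right, hxy]
    simp only [RCLike.star_def, conj_trivial]
    have h : (0:ℝ) ≤ ⟪B y, y⟫ ^ (-μ) * ⟪B y, y⟫ := by positivity
    nlinarith
  · -- B x ≠ 0, B y = 0
    have hxy : ⟪B x, y⟫ = 0 := by rw [hBsa x y, hy, inner_zero_right]
    have ha := hpos x hx
    rw [hΘ x hx, hΘ0 y hy, sub_zero, inner_smul_left, inner_sub_right, hxy]
    simp only [RCLike.star_def, conj_trivial]
    have h : (0:ℝ) ≤ ⟪B x, x⟫ ^ (-μ) * ⟪B x, x⟫ := by positivity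
    nlinarith
  · -- both nonzero
    have hyx : ⟪B y, x⟫ = ⟪B x, y⟫ := by rw [hBsa y x, real_inner_comm]
    have ha := hpos x hx
    have hb := hpos y hy
    have key := theta_key _ _ (⟪B x, y⟫) μ ha hb hμ1 hμ2 (CS x y)
    rw [hΘ x hx, hΘ y hy, inner_sub_left, inner_smul_left, inner_smul_left,
      inner_sub_right, inner_sub_right, hyx]
    simp only [RCLike.star_def, conj_trivial]
    nlinarith [key]
end

section
/- Let γ > 0 and μ ∈ (0, 1). Let V : [0,∞) → ℝ be nonnegative, continuous on [0,∞), differentiable on (0,∞), and suppose V'(t) ≤ −2γ·V(t)^{1−μ} for all t > 0. Then V(t)^μ ≤ max(V(0)^μ − 2γμ·t, 0) for all t ≥ 0; in particular V(t) = 0 for all t ≥ V(0)^μ/(2γμ). -/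
open Set

lemma fte_antitone (γ μ : ℝ) (hγ : 0 < γ) (hμ : μ ∈ Set.Ioo (0:ℝ) 1)
    (V : ℝ → ℝ)
    (hVnonneg : ∀ t ≥ (0:ℝ), 0 ≤ V t)
    (hVcont : ContinuousOn V (Set.Ici 0))
    (hVdiff : ∀ t > (0:ℝ), DifferentiableAt ℝ V t)
    (hVineq : ∀ t > (0:ℝ), deriv V t ≤ -(2 * γ) * (V t) ^ (1 - μ)) :
    AntitoneOn V (Set.Ici 0) := by
  apply antitoneOn_of_deriv_nonpos (convex_Ici 0) hVcont
  · intro x hx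
    rw [interior_Ici] at hx
    exact (hVdiff x hx).differentiableWithinAt
  · intro x hx
    rw [interior_Ici] at hx
    refine (hVineq x hx).trans ?_
    have : (0:ℝ) ≤ (V x) ^ (1 - μ) := Real.rpow_nonneg (hVnonneg x hx.le) _
    nlinarith

lemma fte_key (γ μ : ℝ) (hγ : 0 < γ) (hμ : μ ∈ Set.Ioo (0:ℝ) 1)
    (V : ℝ → ℝ)
    (hVnonneg : ∀ t ≥ (0:ℝ), 0 ≤ V t)
    (hVcont : ContinuousOn V (Set.Ici 0))
    (hVdiff : ∀ t > (0:ℝ), DifferentiableAt ℝ V t)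
    (hVineq : ∀ t > (0:ℝ), deriv V t ≤ -(2 * γ) * (V t) ^ (1 - μ))
    (t : ℝ) (ht : 0 < t) (hpos : ∀ s ∈ Set.Icc (0:ℝ) t, 0 < V s) :
    (V t) ^ μ ≤ (V 0) ^ μ - 2 * γ * μ * t := by
  obtain ⟨hμ0, hμ1⟩ := hμ
  set W : ℝ → ℝ := fun s => (V s) ^ μ with hW
  have hWcont : ContinuousOn W (Set.Icc 0 t) := by
    apply ContinuousOn.rpow_const (hVcont.mono (Icc_subset_Ici_self))
    intro x hx
    exact Or.inr hμ0.le
  have hWderiv : ∀ x ∈ Set.Ioo (0:ℝ) t,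
      HasDerivAt W (deriv V x * μ * (V x) ^ (μ - 1)) x := by
    intro x hx
    exact (hVdiff x hx.1).hasDerivAt.rpow_const
      (Or.inl (hpos x ⟨hx.1.le, hx.2.le⟩).ne')
  obtain ⟨c, hc, hcd⟩ := exists_hasDerivAt_eq_slope W
    (fun x => deriv V x * μ * (V x) ^ (μ - 1)) ht hWcont hWderiv
  have hVc : 0 < V c := hpos c ⟨hc.1.le, hc.2.le⟩
  have hbound : deriv V c * μ * (V c) ^ (μ - 1) ≤ -(2 * γ * μ) := by
    have h1 : deriv V c ≤ -(2 * γ) * (V c) ^ (1 - μ) := hVineq c hc.1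
    have h2 : (0:ℝ) ≤ μ * (V c) ^ (μ - 1) :=
      mul_nonneg hμ0.le (Real.rpow_nonneg hVc.le _)
    have h3 : deriv V c * (μ * (V c) ^ (μ - 1)) ≤
        (-(2 * γ) * (V c) ^ (1 - μ)) * (μ * (V c) ^ (μ - 1)) :=
      mul_le_mul_of_nonneg_right h1 h2
    calc deriv V c * μ * (V c) ^ (μ - 1)
        = deriv V c * (μ * (V c) ^ (μ - 1)) := by ring
      _ ≤ (-(2 * γ) * (V c) ^ (1 - μ)) * (μ * (V c) ^ (μ - 1)) := h3
      _ = -(2 * γ * μ) * ((V c) ^ (1 - μ) * (V c) ^ (μ - 1)) := by ring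
      _ = -(2 * γ * μ) := by
          rw [← Real.rpow_add hVc]
          norm_num
  rw [hcd] at hbound
  have : (W t - W 0) / (t - 0) ≤ -(2 * γ * μ) := hbound
  rw [sub_zero, div_le_iff₀ ht] at this
  have := this
  simp only [hW] at this ⊢
  linarith

/-- Scalar finite-time extinction lemma: a nonnegative function `V`,
continuous on `[0,∞)` and differentiable on `(0,∞)`, satisfying `V' ≤ -2γ V^(1-μ)` with
`γ > 0`, `μ ∈ (0,1)`, satisfies `V(t)^μ ≤ max (V(0)^μ - 2γμ t) 0` and vanishes for
`t ≥ V(0)^μ/(2γμ)`. -/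
theorem finite_time_extinction_scalar
    (γ μ : ℝ) (hγ : 0 < γ) (hμ : μ ∈ Set.Ioo (0:ℝ) 1)
    (V : ℝ → ℝ)
    (hVnonneg : ∀ t ≥ (0:ℝ), 0 ≤ V t)
    (hVcont : ContinuousOn V (Set.Ici 0))
    (hVdiff : ∀ t > (0:ℝ), DifferentiableAt ℝ V t)
    (hVineq : ∀ t > (0:ℝ), deriv V t ≤ -(2 * γ) * (V t) ^ (1 - μ)) :
    (∀ t ≥ (0:ℝ), (V t) ^ μ ≤ max ((V 0) ^ μ - 2 * γ * μ * t) 0) ∧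
    (∀ t ≥ (V 0) ^ μ / (2 * γ * μ), V t = 0) := by
  obtain ⟨hμ0, hμ1⟩ := hμ
  have hanti := fte_antitone γ μ hγ ⟨hμ0, hμ1⟩ V hVnonneg hVcont hVdiff hVineq
  -- case analysis helper
  have main : ∀ t ≥ (0:ℝ), (V t = 0) ∨ ((V t) ^ μ ≤ (V 0) ^ μ - 2 * γ * μ * t) := by
    intro t ht
    rcases eq_or_lt_of_le ht with rfl | ht'
    · right; simp
    by_cases hz : ∃ s ∈ Set.Icc (0:ℝ) t, V s = 0
    · left
      obtain ⟨s, hs, hVs⟩ := hz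
      have h1 : V t ≤ V s := hanti hs.1 ht hs.2
      have h2 : 0 ≤ V t := hVnonneg t ht
      linarith
    · right
      push_neg at hz
      have hpos : ∀ s ∈ Set.Icc (0:ℝ) t, 0 < V s := fun s hs =>
        lt_of_le_of_ne (hVnonneg s hs.1) (Ne.symm (hz s hs))
      exact fte_key γ μ hγ ⟨hμ0, hμ1⟩ V hVnonneg hVcont hVdiff hVineq t ht' hpos
  constructor
  · intro t ht
    rcases main t ht with h | h
    · rw [h, Real.zero_rpow hμ0.ne']
      exact le_max_right _ _
    · exact h.trans (le_max_left _ _)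
  · intro t ht
    have hc : 0 < 2 * γ * μ := by positivity
    have ht0 : (0:ℝ) ≤ t := le_trans (div_nonneg (Real.rpow_nonneg (hVnonneg 0 le_rfl) μ) hc.le) ht
    rcases main t ht0 with h | h
    · exact h
    · by_contra hne
      have hVt : 0 < V t := lt_of_le_of_ne (hVnonneg t ht0) (Ne.symm hne)
      have h1 : 0 < (V t) ^ μ := Real.rpow_pos_of_pos hVt μ
      have h2 : (V 0) ^ μ / (2 * γ * μ) ≤ t := ht
      rw [div_le_iff₀ hc] at h2
      nlinarith
end

section
/- Let H be a real Hilbert space and B a bounded, self-adjoint, positive linear operator on H. Let γ > 0 be such that γ·⟨Bx, x⟩ ≤ ‖Bx‖² for all x ∈ H, let μ ∈ (0, 1/2), and let φ : H → [0,∞). Let y : [0,∞) → H be differentiable and f : [0,∞) → H be such that for all t > 0: y'(t) = f(t) + u(t)·B(y(t)), where ⟨f(t), B(y(t))⟩ ≤ φ(y(t))·‖B(y(t))‖², and u(t) = −(⟨B(y(t)), y(t)⟩^{−μ} + φ(y(t))) if B(y(t)) ≠ 0 and u(t) = 0 if B(y(t)) = 0. Then, setting T₁ := ⟨B(y(0)),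 y(0)⟩^μ/(2γμ), one has ⟨B(y(t)), y(t)⟩^μ ≤ ⟨B(y(0)), y(0)⟩^μ − 2γμ·t for all t ∈ [0, T₁], and B(y(t)) = 0 for all t ≥ T₁. -/
/-!
`V t = ⟪B (y t), y t⟫` is a Lyapunov function. Along the trajectory `V' = 2⟪y', B y⟫`, and
wherever `V > 0` the feedback together with (H2) and (H3) gives
`V' ≤ -2 V^(-μ) ‖B y‖² ≤ -2γ V^(1-μ)`, i.e. `(V^μ)' ≤ -2γμ`; at a zero of `V ≥ 0` we have a
minimum, so `V' = 0`. Hence `V` is nonincreasing, and if `V t > 0` then `V` is positive on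
`[0, t]`, where integrating gives `V t ^ μ ≤ V 0 ^ μ - 2γμ t`. This is impossible past `T₁`, so
`V` vanishes there, and `⟪B x, x⟫ = 0` forces `B x = 0` for a positive `B` (the quadratic
`s ↦ ⟪B (x + s B x), x + s B x⟫ ≥ 0` has nonpositive discriminant `4‖B x‖⁴`).
-/

open RealInnerProductSpace Set

section Decay

variable {V V' : ℝ → ℝ} {c μ : ℝ}

theorem antitoneOn_Ici_of_rpow_decay (hc : 0 ≤ c) (hcont : ContinuousOn V (Ici 0))
    (hnonneg : ∀ t ≥ 0, 0 ≤ V t) (hderiv : ∀ t > 0, HasDerivAt V (V' t) t)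
    (hdecay : ∀ t > 0, 0 < V t → V' t ≤ -c * V t ^ (1 - μ)) :
    AntitoneOn V (Ici 0) := by
  refine antitoneOn_of_hasDerivWithinAt_nonpos (convex_Ici 0) hcont
    (fun t ht => (hderiv t (by simpa using ht)).hasDerivWithinAt) fun t ht => ?_
  rw [interior_Ici] at ht
  rcases (hnonneg t ht.le).eq_or_lt with hzero | hpos
  · have hmin : IsLocalMin V t := by
      filter_upwards [Ici_mem_nhds ht] with s hs
      exact hzero ▸ hnonneg s hs
    exact (hmin.hasDerivAt_eq_zero (hderiv t ht)).le
  · exact (hdecay t ht hpos).trans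
      (mul_nonpos_of_nonpos_of_nonneg (neg_nonpos.mpr hc) (Real.rpow_nonneg hpos.le _))

theorem rpow_le_sub_of_rpow_decay (hc : 0 ≤ c) (hμ : 0 ≤ μ) (hcont : ContinuousOn V (Ici 0))
    (hnonneg : ∀ t ≥ 0, 0 ≤ V t) (hderiv : ∀ t > 0, HasDerivAt V (V' t) t)
    (hdecay : ∀ t > 0, 0 < V t → V' t ≤ -c * V t ^ (1 - μ))
    {t : ℝ} (ht : 0 ≤ t) (hVt : 0 < V t) :
    V t ^ μ ≤ V 0 ^ μ - c * μ * t := by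
  have hanti := antitoneOn_Ici_of_rpow_decay hc hcont hnonneg hderiv hdecay
  have hpos : ∀ s ∈ Icc 0 t, 0 < V s := fun s hs =>
    hVt.trans_le (hanti hs.1 ht hs.2)
  have hg : AntitoneOn (fun s => V s ^ μ + c * μ * s) (Icc 0 t) := by
    refine antitoneOn_of_hasDerivWithinAt_nonpos
      (f' := fun s => V' s * μ * V s ^ (μ - 1) + c * μ * 1) (convex_Icc 0 t)
      (((hcont.mono Icc_subset_Ici_self).rpow_const fun s hs => Or.inl (hpos s hs).ne').add
        (continuousOn_const.mul continuousOn_id))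
      (fun s hs => ?_) fun s hs => ?_
    · rw [interior_Icc] at hs
      exact ((((hderiv s hs.1).rpow_const (Or.inl (hpos s (Ioo_subset_Icc_self hs)).ne'))).add
        ((hasDerivAt_id s).const_mul (c * μ))).hasDerivWithinAt
    · rw [interior_Icc] at hs
      have hVs := hpos s (Ioo_subset_Icc_self hs)
      have hcancel : V s ^ (1 - μ) * V s ^ (μ - 1) = 1 := by
        rw [← Real.rpow_add hVs]; norm_num
      calc V' s * μ * V s ^ (μ - 1) + c * μ * 1
          ≤ -c * V s ^ (1 - μ) * μ * V s ^ (μ - 1) + c * μ * 1 := by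
            gcongr ?_ * _ * _ + _
            exact hdecay s hs.1 hVs
        _ = 0 := by linear_combination (-c * μ) * hcancel
  exact le_sub_iff_add_le.mpr (by simpa using hg ⟨le_rfl, ht⟩ ⟨ht, le_rfl⟩ ht)

theorem rpow_decay_extinction (hc : 0 < c) (hμ : 0 < μ) (hcont : ContinuousOn V (Ici 0))
    (hnonneg : ∀ t ≥ 0, 0 ≤ V t) (hderiv : ∀ t > 0, HasDerivAt V (V' t) t)
    (hdecay : ∀ t > 0, 0 < V t → V' t ≤ -c * V t ^ (1 - μ)) :
    (∀ t, 0 ≤ t → t ≤ V 0 ^ μ / (c * μ) → V t ^ μ ≤ V 0 ^ μ - c * μ * t) ∧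
      ∀ t ≥ V 0 ^ μ / (c * μ), V t = 0 := by
  have hcμ : 0 < c * μ := mul_pos hc hμ
  have hbound {t : ℝ} (ht : 0 ≤ t) (hVt : 0 < V t) : V t ^ μ ≤ V 0 ^ μ - c * μ * t :=
    rpow_le_sub_of_rpow_decay hc.le hμ.le hcont hnonneg hderiv hdecay ht hVt
  have hT : 0 ≤ V 0 ^ μ / (c * μ) := div_nonneg (Real.rpow_nonneg (hnonneg 0 le_rfl) _) hcμ.le
  constructor
  · intro t ht htT
    rcases (hnonneg t ht).eq_or_lt with hzero | hpos
    · rw [← hzero, Real.zero_rpow hμ.ne', sub_nonneg, mul_comm]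
      exact (le_div_iff₀ hcμ).mp htT
    · exact hbound ht hpos
  · intro t htT
    have ht : 0 ≤ t := hT.trans htT
    refine ((hnonneg t ht).eq_or_lt.resolve_right fun hpos => ?_).symm
    have hlate : V 0 ^ μ ≤ c * μ * t := (div_le_iff₀' hcμ).mp htT
    linarith [hbound ht hpos, Real.rpow_pos_of_pos hpos μ]

end Decay

section Operator

variable {H : Type*} [NormedAddCommGroup H] [InnerProductSpace ℝ H]

theorem LinearMap.IsPositive.apply_eq_zero_of_inner_self_eq_zero {T : H →ₗ[ℝ] H}
    (hT : T.IsPositive) {x : H} (hx : ⟪T x, x⟫ = 0) : T x = 0 := by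
  have hquad : ∀ s : ℝ, 0 ≤ ⟪T (T x), T x⟫ * (s * s) + 2 * ‖T x‖ ^ 2 * s + 0 := fun s => by
    have := hT.inner_nonneg_left (x + s • T x)
    simp only [map_add, map_smul, inner_add_left, inner_add_right, real_inner_smul_left,
      real_inner_smul_right, hx, hT.isSymmetric (T x) x, real_inner_self_eq_norm_sq] at this
    linarith
  have hdisc : (2 * ‖T x‖ ^ 2) ^ 2 ≤ 0 := by simpa [discrim] using discrim_le_zero hquad
  have : (2 * ‖T x‖ ^ 2) ^ 2 = 0 := le_antisymm hdisc (sq_nonneg _)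
  simpa using this

theorem HasDerivAt.inner_map_self {B : H →L[ℝ] H} (hB : (B : H →ₗ[ℝ] H).IsSymmetric)
    {y : ℝ → H} {y' : H} {t : ℝ} (hy : HasDerivAt y y' t) :
    HasDerivAt (fun s => ⟪B (y s), y s⟫) (2 * ⟪y', B (y t)⟫) t := by
  refine ((B.hasFDerivAt.comp_hasDerivAt t hy).inner ℝ hy).congr_deriv ?_
  have hsymm : ⟪B y', y t⟫ = ⟪y', B (y t)⟫ := hB y' (y t)
  rw [Function.comp_apply, hsymm, real_inner_comm, two_mul]

theorem inner_add_feedback_le {f b : H} {φ v μ γ : ℝ} (hv : 0 < v) (hγ : γ * v ≤ ‖b‖ ^ 2)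
    (hf : ⟪f, b⟫ ≤ φ * ‖b‖ ^ 2) :
    ⟪f + (-(v ^ (-μ) + φ)) • b, b⟫ ≤ -γ * v ^ (1 - μ) := by
  have hpow : v ^ (1 - μ) = v ^ (-μ) * v := by
    rw [sub_eq_neg_add, Real.rpow_add hv, Real.rpow_one]
  calc ⟪f + (-(v ^ (-μ) + φ)) • b, b⟫ = ⟪f, b⟫ - (v ^ (-μ) + φ) * ‖b‖ ^ 2 := by
        rw [inner_add_left, real_inner_smul_left, real_inner_self_eq_norm_sq]; ring
    _ ≤ -(v ^ (-μ) * ‖b‖ ^ 2) := by linarith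
    _ ≤ -(v ^ (-μ) * (γ * v)) := by gcongr
    _ = -γ * v ^ (1 - μ) := by rw [hpow]; ring

end Operator

theorem feedback_drives_output_to_zero_general
    {H : Type*} [NormedAddCommGroup H] [InnerProductSpace ℝ H]
    (B : H →L[ℝ] H)
    (hBsa : ∀ x y : H, ⟪B x, y⟫ = ⟪x, B y⟫)
    (hBpos : ∀ x : H, 0 ≤ ⟪B x, x⟫)
    (γ : ℝ) (hγ : 0 < γ)
    (hγB : ∀ x : H, γ * ⟪B x, x⟫ ≤ ‖B x‖ ^ 2)
    (μ : ℝ) (hμ : μ ∈ Set.Ioo (0:ℝ) (1/2))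
    (φ : H → ℝ)
    (y : ℝ → H) (f : ℝ → H) (u : ℝ → ℝ)
    (hycont : ContinuousOn y (Set.Ici 0))
    (hyderiv : ∀ t > (0:ℝ), HasDerivAt y (f t + u t • B (y t)) t)
    (hf : ∀ t > (0:ℝ), ⟪f t, B (y t)⟫ ≤ φ (y t) * ‖B (y t)‖ ^ 2)
    (hu : ∀ t : ℝ, B (y t) ≠ 0 →
      u t = -(((⟪B (y t), y t⟫ : ℝ) ^ (-μ)) + φ (y t))) :
    (∀ t : ℝ, 0 ≤ t → t ≤ (⟪B (y 0), y 0⟫ : ℝ) ^ μ / (2 * γ * μ) →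
      (⟪B (y t), y t⟫ : ℝ) ^ μ ≤ (⟪B (y 0), y 0⟫ : ℝ) ^ μ - 2 * γ * μ * t) ∧
    (∀ t ≥ (⟪B (y 0), y 0⟫ : ℝ) ^ μ / (2 * γ * μ), B (y t) = 0) := by
  have hB : (B : H →ₗ[ℝ] H).IsPositive := ⟨hBsa, hBpos⟩
  have hdecay : ∀ t > 0, 0 < ⟪B (y t), y t⟫ →
      2 * ⟪f t + u t • B (y t), B (y t)⟫ ≤ -(2 * γ) * ⟪B (y t), y t⟫ ^ (1 - μ) := by
    intro t ht hpos
    have hBy : B (y t) ≠ 0 := fun h => by simp [h] at hpos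
    rw [hu t hBy]
    linarith [inner_add_feedback_le (μ := μ) hpos (hγB (y t)) (hf t ht)]
  obtain ⟨hbound, hzero⟩ := rpow_decay_extinction (by positivity) hμ.1
    ((B.continuous.comp_continuousOn hycont).inner hycont) (fun t _ => hBpos (y t))
    (fun t ht => (hyderiv t ht).inner_map_self hBsa) hdecay
  exact ⟨hbound, fun t ht => hB.apply_eq_zero_of_inner_self_eq_zero (hzero t ht)⟩

/-- Trajectory-level core of Theorem 3.2: along a trajectory of
`y' = f + u·By` with the feedback `u = -(⟨By,y⟩^(-μ) + φ(y))` (switched off when `By = 0`),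
under the observation condition `γ⟨Bx,x⟩ ≤ ‖Bx‖²` and the dissipation-type condition
`⟨f, By⟩ ≤ φ(y)‖By‖²`, the quantity `⟨By(t), y(t)⟩^μ` decays linearly and `B y(t) = 0`
after time `T₁ = ⟨By(0), y(0)⟩^μ/(2γμ)`. -/
theorem feedback_drives_output_to_zero
    {H : Type*} [NormedAddCommGroup H] [InnerProductSpace ℝ H] [CompleteSpace H]
    (B : H →L[ℝ] H)
    (hBsa : ∀ x y : H, ⟪B x, y⟫ = ⟪x, B y⟫)
    (hBpos : ∀ x : H, 0 ≤ ⟪B x, x⟫)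
    (γ : ℝ) (hγ : 0 < γ)
    (hγB : ∀ x : H, γ * ⟪B x, x⟫ ≤ ‖B x‖ ^ 2)
    (μ : ℝ) (hμ : μ ∈ Set.Ioo (0:ℝ) (1/2))
    (φ : H → ℝ) (hφ : ∀ z : H, 0 ≤ φ z)
    (y : ℝ → H) (f : ℝ → H) (u : ℝ → ℝ)
    (hycont : ContinuousOn y (Set.Ici 0))
    (hyderiv : ∀ t > (0:ℝ), HasDerivAt y (f t + u t • B (y t)) t)
    (hf : ∀ t > (0:ℝ), ⟪f t, B (y t)⟫ ≤ φ (y t) * ‖B (y t)‖ ^ 2)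
    (hu : ∀ t : ℝ, B (y t) ≠ 0 →
      u t = -(((⟪B (y t), y t⟫ : ℝ) ^ (-μ)) + φ (y t)))
    (hu0 : ∀ t : ℝ, B (y t) = 0 → u t = 0) :
    (∀ t : ℝ, 0 ≤ t → t ≤ (⟪B (y 0), y 0⟫ : ℝ) ^ μ / (2 * γ * μ) →
      (⟪B (y t), y t⟫ : ℝ) ^ μ ≤ (⟪B (y 0), y 0⟫ : ℝ) ^ μ - 2 * γ * μ * t) ∧
    (∀ t ≥ (⟪B (y 0), y 0⟫ : ℝ) ^ μ / (2 * γ * μ), B (y t) = 0) :=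
  feedback_drives_output_to_zero_general B hBsa hBpos γ hγ hγB μ hμ φ y f u hycont hyderiv hf hu
end

section
/- Let H be a real Hilbert space and S : [0,∞) → B(H) a family of bounded operators with S(0) = id, S(s+t) = S(s) ∘ S(t), t ↦ S(t)x continuous for each x ∈ H, and ‖S(t)‖ ≤ M·e^{ωt} for some M ≥ 1, ω ∈ ℝ. Let B be a bounded linear operator on H, W := {x ∈ H : B(S(t)x) = 0 for all t ≥ 0}, let z ∈ W, and let u : [0,∞) → ℝ be measurable and locally bounded. If y : [0,∞) → H is continuous and satisfies the mild-solution identity y(t) = S(t)z + ∫₀ᵗ u(τ)·S(t−τ)(B(y(τ))) dτ for all t ≥ 0, then y(t) = S(t)z for all t ≥ 0. Consequently, if y(t) = 0 for all t ≥ T, then S(t)z = 0 for all t ≥ T. -/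
open RealInnerProductSpace

/-!
Since `z` is unobservable, `B (y τ) = B (y τ - S τ z)`, so the error `e t = y t - S t z` obeys
`e t = ∫₀ᵗ u τ • S (t - τ) (B (e τ)) dτ`. On `[0, T]` the control and the semigroup are bounded,
hence `‖e t‖ ≤ K ∫₀ᵗ ‖e τ‖ dτ`, and Grönwall's inequality forces `e = 0`.
-/

open Set Topology MeasureTheory

theorem eq_zero_of_le_mul_integral {g : ℝ → ℝ} {K a b : ℝ} (hg : ContinuousOn g (Icc a b))
    (hg0 : ∀ x ∈ Icc a b, 0 ≤ g x) (hle : ∀ x ∈ Icc a b, g x ≤ K * ∫ τ in a..x, g τ) :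
    ∀ x ∈ Icc a b, g x = 0 := by
  set G : ℝ → ℝ := fun x => ∫ τ in a..x, g τ
  have hG0 : ∀ x ∈ Icc a b, 0 ≤ G x := fun x hx =>
    intervalIntegral.integral_nonneg hx.1 fun τ hτ => hg0 τ ⟨hτ.1, hτ.2.trans hx.2⟩
  have hGcont : ContinuousOn G (Icc a b) := by
    rcases le_or_gt a b with hab | hab
    · rw [← uIcc_of_le hab] at hg ⊢
      exact intervalIntegral.continuousOn_primitive_interval hg.integrableOn_uIcc
    · simp [Icc_eq_empty_of_lt hab]
  have hGderiv : ∀ x ∈ Ico a b, HasDerivWithinAt G (g x) (Ici x) x := by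
    intro x hx
    have hnhds : Icc a b ∈ 𝓝[>] x :=
      Filter.mem_of_superset (Ioo_mem_nhdsGT hx.2) fun τ hτ => ⟨hx.1.trans hτ.1.le, hτ.2.le⟩
    refine intervalIntegral.integral_hasDerivWithinAt_right (t := Ioi x)
      ((hg.mono ?_).intervalIntegrable) ?_ ?_
    · exact uIcc_of_le hx.1 ▸ Icc_subset_Icc_right hx.2.le
    · exact (hg.stronglyMeasurableAtFilter_nhdsWithin measurableSet_Icc x).filter_mono
        (nhdsWithin_le_of_mem hnhds)
    · exact (hg x (Ico_subset_Icc_self hx)).mono_of_mem_nhdsWithin hnhds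
  have hGzero : ∀ x ∈ Icc a b, G x = 0 :=
    eq_zero_of_abs_deriv_le_mul_abs_self_of_eq_zero_right hGcont hGderiv
      intervalIntegral.integral_same fun x hx => by
        rw [Real.norm_of_nonneg (hg0 x (Ico_subset_Icc_self hx)),
          Real.norm_of_nonneg (hG0 x (Ico_subset_Icc_self hx))]
        exact hle x (Ico_subset_Icc_self hx)
  intro x hx
  exact le_antisymm (by simpa [G, hGzero x hx] using hle x hx) (hg0 x hx)

theorem norm_le_mul_exp_abs_mul_of_mem_Icc {E : Type*} [SeminormedAddCommGroup E] {S : ℝ → E}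
    {M ω T t : ℝ} (hS : ∀ t ≥ (0:ℝ), ‖S t‖ ≤ M * Real.exp (ω * t)) (ht : t ∈ Icc 0 T) :
    ‖S t‖ ≤ M * Real.exp (|ω| * T) := by
  have hM : 0 ≤ M := by simpa using (norm_nonneg _).trans (hS 0 le_rfl)
  calc ‖S t‖ ≤ M * Real.exp (ω * t) := hS t ht.1
    _ ≤ M * Real.exp (|ω| * T) :=
      mul_le_mul_of_nonneg_left (Real.exp_le_exp.2 <|
        (mul_le_mul_of_nonneg_right (le_abs_self ω) ht.1).trans
          (mul_le_mul_of_nonneg_left ht.2 (abs_nonneg ω))) hM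

theorem norm_sub_le_mul_integral_of_mild {H : Type*} [NormedAddCommGroup H] [NormedSpace ℝ H]
    {S : ℝ → H →L[ℝ] H} {B : H →L[ℝ] H} {z : H} {u : ℝ → ℝ} {y : ℝ → H} {x Cu Cs : ℝ}
    (hz : ∀ t ≥ (0:ℝ), B (S t z) = 0)
    (hmild : y x = S x z + ∫ τ in (0:ℝ)..x, u τ • S (x - τ) (B (y τ)))
    (hx : 0 ≤ x) (hu : ∀ τ ∈ Icc 0 x, |u τ| ≤ Cu) (hS : ∀ s ∈ Icc 0 x, ‖S s‖ ≤ Cs)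
    (hint : IntervalIntegrable (fun τ => ‖y τ - S τ z‖) volume 0 x) :
    ‖y x - S x z‖ ≤ Cu * Cs * ‖B‖ * ∫ τ in (0:ℝ)..x, ‖y τ - S τ z‖ := by
  have hCu : 0 ≤ Cu := (abs_nonneg _).trans (hu 0 ⟨le_rfl, hx⟩)
  have hpointwise : ∀ τ ∈ Ioc 0 x,
      ‖u τ • S (x - τ) (B (y τ))‖ ≤ Cu * Cs * ‖B‖ * ‖y τ - S τ z‖ := fun τ hτ =>
    calc ‖u τ • S (x - τ) (B (y τ))‖ = |u τ| * ‖S (x - τ) (B (y τ - S τ z))‖ := by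
          rw [norm_smul, Real.norm_eq_abs, map_sub B, hz τ hτ.1.le, sub_zero]
      _ ≤ Cu * (Cs * (‖B‖ * ‖y τ - S τ z‖)) :=
          mul_le_mul (hu τ (Ioc_subset_Icc_self hτ))
            ((S (x - τ)).le_of_opNorm_le_of_le
              (hS _ ⟨sub_nonneg.2 hτ.2, sub_le_self _ hτ.1.le⟩) (B.le_opNorm _))
            (norm_nonneg _) hCu
      _ = Cu * Cs * ‖B‖ * ‖y τ - S τ z‖ := by ring
  rw [hmild, add_sub_cancel_left, ← intervalIntegral.integral_const_mul]
  exact intervalIntegral.norm_integral_le_of_norm_le hx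
    (ae_of_all _ hpointwise) (hint.const_mul _)

theorem mild_solution_from_unobservable_is_free_general
    {H : Type*} [NormedAddCommGroup H] [InnerProductSpace ℝ H]
    (S : ℝ → H →L[ℝ] H) (B : H →L[ℝ] H)
    (hScont : ∀ x : H, ContinuousOn (fun t => S t x) (Set.Ici 0))
    (M ω : ℝ)
    (hSbound : ∀ t ≥ (0:ℝ), ‖S t‖ ≤ M * Real.exp (ω * t))
    (z : H) (hz : ∀ t ≥ (0:ℝ), B (S t z) = 0)
    (u : ℝ → ℝ)
    (hubdd : ∀ T ≥ (0:ℝ), ∃ C : ℝ, ∀ t ∈ Set.Icc (0:ℝ) T, |u t| ≤ C)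
    (y : ℝ → H) (hycont : Continuous y)
    (hmild : ∀ t ≥ (0:ℝ),
      y t = S t z + ∫ τ in (0:ℝ)..t, u τ • S (t - τ) (B (y τ))) :
    (∀ t ≥ (0:ℝ), y t = S t z) ∧
    (∀ T ≥ (0:ℝ), (∀ t ≥ T, y t = 0) → ∀ t ≥ T, S t z = 0) := by
  have hfree : ∀ t ≥ (0:ℝ), y t = S t z := by
    intro t ht
    obtain ⟨Cu, hCu⟩ := hubdd t ht
    have hg : ContinuousOn (fun τ => ‖y τ - S τ z‖) (Icc 0 t) :=
      (hycont.continuousOn.sub ((hScont z).mono Icc_subset_Ici_self)).norm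
    have hzero := eq_zero_of_le_mul_integral hg (fun _ _ => norm_nonneg _) fun x hx =>
      norm_sub_le_mul_integral_of_mild hz (hmild x hx.1) hx.1
        (fun τ hτ => hCu τ ⟨hτ.1, hτ.2.trans hx.2⟩)
        (fun s hs => norm_le_mul_exp_abs_mul_of_mem_Icc hSbound ⟨hs.1, hs.2.trans hx.2⟩)
        ((hg.mono (Icc_subset_Icc_right hx.2)).intervalIntegrable_of_Icc hx.1)
    exact sub_eq_zero.1 (norm_eq_zero.1 (hzero t ⟨ht, le_rfl⟩))
  exact ⟨hfree, fun T hT hy t ht => hfree t (hT.trans ht) ▸ hy t ht⟩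

/-- (Proposition 3.1 of the paper, trajectory level.) For a strongly
continuous, exponentially bounded semigroup `S` and a bounded operator `B`, any continuous
mild solution of `y' = A y + u B y` issued from a point `z` in the unobservable set
`W = {x : B (S t x) = 0 ∀ t ≥ 0}` coincides with the free trajectory `S(·)z`; consequently,
if it vanishes after time `T`, so does `S(·)z`. -/
theorem mild_solution_from_unobservable_is_free
    {H : Type*} [NormedAddCommGroup H] [InnerProductSpace ℝ H] [CompleteSpace H]
    (S : ℝ → H →L[ℝ] H) (B : H →L[ℝ] H)
    (hS0 : S 0 = ContinuousLinearMap.id ℝ H)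
    (hS : ∀ s ≥ (0:ℝ), ∀ t ≥ (0:ℝ), S (s + t) = (S s).comp (S t))
    (hScont : ∀ x : H, ContinuousOn (fun t => S t x) (Set.Ici 0))
    (M ω : ℝ) (hM : 1 ≤ M)
    (hSbound : ∀ t ≥ (0:ℝ), ‖S t‖ ≤ M * Real.exp (ω * t))
    (z : H) (hz : ∀ t ≥ (0:ℝ), B (S t z) = 0)
    (u : ℝ → ℝ) (humeas : Measurable u)
    (hubdd : ∀ T ≥ (0:ℝ), ∃ C : ℝ, ∀ t ∈ Set.Icc (0:ℝ) T, |u t| ≤ C)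
    (y : ℝ → H) (hycont : Continuous y)
    (hmild : ∀ t ≥ (0:ℝ),
      y t = S t z + ∫ τ in (0:ℝ)..t, u τ • S (t - τ) (B (y τ))) :
    (∀ t ≥ (0:ℝ), y t = S t z) ∧
    (∀ T ≥ (0:ℝ), (∀ t ≥ T, y t = 0) → ∀ t ≥ T, S t z = 0) :=
  mild_solution_from_unobservable_is_free_general S B hScont M ω hSbound z hz u hubdd y hycont hmild
end

section
/- Let H be a real Hilbert space, ζ ∈ H with ζ ≠ 0, η ∈ H, and μ ∈ (0, 1/2). Let y : [0,∞) → H be differentiable and g : [0,∞) → H satisfy ⟨g(t), ζ⟩ = ⟨y(t), η⟩ for all t ≥ 0, and suppose for all t > 0 that y'(t) = g(t) − c(t)·ζ − (⟨y(t), η⟩/‖ζ‖²)·ζ, where c(t) = ⟨y(t), ζ⟩·|⟨y(t), ζ⟩|^{−2μ} if ⟨y(t), ζ⟩ ≠ 0 and c(t) = 0 otherwise. Then, setting T₁ := |⟨y(0), ζ⟩|^{2μ}/(2μ‖ζ‖²), one has |⟨y(t), ζ⟩|^{2μ} ≤ |⟨y(0), ζ⟩|^{2μ} − 2μ‖ζ‖²·t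 for all t ∈ [0, T₁], and ⟨y(t), ζ⟩ = 0 for all t ≥ T₁. -/
/-!
Wherever `φ t = ⟪y t, ζ⟫` is nonzero, the correction term `(⟪y, η⟫ / ‖ζ‖²) • ζ` cancels
`⟪g, ζ⟫`, so `φ' = -‖ζ‖² φ |φ|^(-2μ)` and `|φ|^(2μ)` has constant derivative `-2μ‖ζ‖²`.
A function that decreases at a constant rate while it is positive can never become positive
again after reaching `0`. Hence at every time `|φ t|^(2μ)` is either `0` or exactly
`|φ 0|^(2μ) - 2μ‖ζ‖² t`, and both claims follow.
-/

open RealInnerProductSpace Set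

theorem HasDerivAt.abs_rpow_const {f : ℝ → ℝ} {f' x p : ℝ} (hf : HasDerivAt f f' x)
    (hx : f x ≠ 0) :
    HasDerivAt (fun t => |f t| ^ p) (p * |f x| ^ (p - 2) * f x * f') x := by
  have hpos : 0 < |f x| := abs_pos.2 hx
  refine (((hasDerivAt_abs hx).comp x hf).rpow_const (p := p) (Or.inl hpos.ne')).congr_deriv ?_
  rw [Function.comp_apply, show p - 1 = (p - 2) + 1 by ring, Real.rpow_add_one hpos.ne']
  linear_combination (f' * p * |f x| ^ (p - 2)) * sign_mul_abs (f x)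

theorem hasDerivAt_abs_rpow_of_hasDerivAt_eq_neg_mul_abs_rpow {φ : ℝ → ℝ} {x p κ : ℝ}
    (hφ : HasDerivAt φ (-(φ x * |φ x| ^ (-p) * κ)) x) (hx : φ x ≠ 0) :
    HasDerivAt (fun t => |φ t| ^ p) (-(p * κ)) x := by
  have hpos : 0 < |φ x| := abs_pos.2 hx
  have hcancel : |φ x| ^ (p - 2) * (φ x * φ x) * |φ x| ^ (-p) = 1 := by
    rw [← abs_mul_abs_self, ← mul_assoc, ← Real.rpow_add_one hpos.ne',
      ← Real.rpow_add_one hpos.ne', ← Real.rpow_add hpos,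
      show p - 2 + 1 + 1 + -p = 0 by ring, Real.rpow_zero]
  convert hφ.abs_rpow_const hx using 1
  linear_combination (p * κ) * hcancel

theorem hasDerivAt_inner_of_hasDerivAt_sub_smul_sub_inner_smul {H : Type*}
    [NormedAddCommGroup H] [InnerProductSpace ℝ H] {y : ℝ → H} {g ζ : H} {a t : ℝ}
    (hζ : ζ ≠ 0) (hy : HasDerivAt y (g - a • ζ - (⟪g, ζ⟫ / ‖ζ‖ ^ 2) • ζ) t) :
    HasDerivAt (fun s => ⟪y s, ζ⟫) (-(a * ‖ζ‖ ^ 2)) t := by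
  refine (hy.inner ℝ (hasDerivAt_const t ζ)).congr_deriv ?_
  have : ‖ζ‖ ≠ 0 := norm_ne_zero_iff.2 hζ
  rw [inner_zero_right, zero_add, inner_sub_left, inner_sub_left, real_inner_smul_left,
    real_inner_smul_left, real_inner_self_eq_norm_sq]
  field_simp
  ring

theorem eq_sub_mul_of_hasDerivAt_eq_neg {f : ℝ → ℝ} {a b K : ℝ} (hab : a ≤ b)
    (hf : ContinuousOn f (Icc a b)) (hderiv : ∀ x ∈ Ioo a b, HasDerivAt f (-K) x) :
    f b = f a - K * (b - a) := by
  rcases hab.eq_or_lt with rfl | hlt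
  · ring
  obtain ⟨ξ, -, hξ⟩ := exists_hasDerivAt_eq_slope f (fun _ => -K) hlt hf hderiv
  field_simp at hξ
  linarith

theorem eq_sub_mul_of_hasDerivAt_eq_neg_of_pos {f : ℝ → ℝ} {a b K : ℝ} (hK : 0 ≤ K)
    (hab : a ≤ b) (hf : ContinuousOn f (Icc a b))
    (hderiv : ∀ x ∈ Ioo a b, 0 < f x → HasDerivAt f (-K) x) (hb : 0 < f b) :
    f b = f a - K * (b - a) := by
  set Z := {x ∈ Icc a b | f x ≤ 0}
  rcases Z.eq_empty_or_nonempty with hZ | hZ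
  · refine eq_sub_mul_of_hasDerivAt_eq_neg hab hf fun x hx => hderiv x hx ?_
    by_contra! hfx
    exact hZ.subset ⟨Ioo_subset_Icc_self hx, hfx⟩
  · -- From the last point `s` of `[a, b]` where `f ≤ 0`, `f` would decrease to `f b ≤ f s ≤ 0`.
    have hZc : IsCompact Z := isCompact_Icc.of_isClosed_subset
      (hf.preimage_isClosed_of_isClosed isClosed_Icc isClosed_Iic) (sep_subset _ _)
    obtain ⟨s, ⟨hs, hfs⟩, hmax⟩ := hZc.exists_isGreatest hZ
    have hsb : s < b := hs.2.lt_of_ne (by rintro rfl; linarith)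
    have hpos : ∀ x ∈ Ioo s b, 0 < f x := fun x hx => by
      by_contra! hfx
      exact hx.1.not_ge (hmax ⟨⟨hs.1.trans hx.1.le, hx.2.le⟩, hfx⟩)
    have := eq_sub_mul_of_hasDerivAt_eq_neg hsb.le (hf.mono (Icc_subset_Icc_left hs.1))
      fun x hx => hderiv x ⟨hs.1.trans_lt hx.1, hx.2⟩ (hpos x hx)
    nlinarith

theorem feedback_drives_scalar_output_to_zero_general
    {H : Type*} [NormedAddCommGroup H] [InnerProductSpace ℝ H]
    (ζ η : H) (hζ : ζ ≠ 0)
    (μ : ℝ) (hμ : μ ∈ Set.Ioo (0:ℝ) (1/2))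
    (y : ℝ → H) (g : ℝ → H) (c : ℝ → ℝ)
    (hycont : ContinuousOn y (Set.Ici 0))
    (hg : ∀ t ≥ (0:ℝ), ⟪g t, ζ⟫ = ⟪y t, η⟫)
    (hyderiv : ∀ t > (0:ℝ),
      HasDerivAt y (g t - c t • ζ - ((⟪y t, η⟫ : ℝ) / ‖ζ‖ ^ 2) • ζ) t)
    (hc : ∀ t : ℝ, (⟪y t, ζ⟫ : ℝ) ≠ 0 →
      c t = (⟪y t, ζ⟫ : ℝ) * |(⟪y t, ζ⟫ : ℝ)| ^ (-(2 * μ))) :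
    (∀ t : ℝ, 0 ≤ t → t ≤ |(⟪y 0, ζ⟫ : ℝ)| ^ (2 * μ) / (2 * μ * ‖ζ‖ ^ 2) →
      |(⟪y t, ζ⟫ : ℝ)| ^ (2 * μ) ≤ |(⟪y 0, ζ⟫ : ℝ)| ^ (2 * μ) - 2 * μ * ‖ζ‖ ^ 2 * t) ∧
    (∀ t ≥ |(⟪y 0, ζ⟫ : ℝ)| ^ (2 * μ) / (2 * μ * ‖ζ‖ ^ 2), (⟪y t, ζ⟫ : ℝ) = 0) := by
  set φ : ℝ → ℝ := fun t => ⟪y t, ζ⟫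
  set ψ : ℝ → ℝ := fun t => |φ t| ^ (2 * μ)
  set K := 2 * μ * ‖ζ‖ ^ 2
  have h2μ : 0 < 2 * μ := by linarith [hμ.1]
  have hK : 0 < K := by have := norm_pos_iff.2 hζ; positivity
  have hψ_nonneg : ∀ t, 0 ≤ ψ t := fun t => Real.rpow_nonneg (abs_nonneg _) _
  have hψ_pos : ∀ t, 0 < ψ t ↔ φ t ≠ 0 := fun t => by
    rw [(hψ_nonneg t).lt_iff_ne', Real.rpow_ne_zero (abs_nonneg _) h2μ.ne', abs_ne_zero]
  have hψ' : ∀ t > 0, 0 < ψ t → HasDerivAt ψ (-K) t := fun t ht hψt => by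
    have hφt := (hψ_pos t).1 hψt
    have hy := hyderiv t ht
    rw [← hg t ht.le, hc t hφt] at hy
    exact hasDerivAt_abs_rpow_of_hasDerivAt_eq_neg_mul_abs_rpow
      (hasDerivAt_inner_of_hasDerivAt_sub_smul_sub_inner_smul hζ hy) hφt
  have hψ_cont : ContinuousOn ψ (Ici 0) :=
    (hycont.inner continuousOn_const).abs.rpow_const fun _ _ => Or.inr h2μ.le
  have hdecay : ∀ t ≥ 0, 0 < ψ t → ψ t = ψ 0 - K * t := fun t ht hψt => by
    simpa only [sub_zero] using eq_sub_mul_of_hasDerivAt_eq_neg_of_pos hK.le ht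
      (hψ_cont.mono Icc_subset_Ici_self) (fun x hx => hψ' x hx.1) hψt
  refine ⟨fun t ht htT => ?_, fun t htT => ?_⟩
  · rw [le_div_iff₀ hK] at htT
    rcases (hψ_nonneg t).eq_or_lt with hψt | hψt
    · linarith
    · linarith [hdecay t ht hψt]
  · have ht : 0 ≤ t := le_trans (div_nonneg (hψ_nonneg 0) hK.le) htT
    rw [ge_iff_le, div_le_iff₀ hK] at htT
    by_contra hφt
    have hψt := (hψ_pos t).2 hφt
    linarith [hdecay t ht hψt]

/-- Trajectory-level core of Proposition 4.1: under the feedback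
`c(t) = ⟨y,ζ⟩|⟨y,ζ⟩|^(-2μ)` (switched off when `⟨y,ζ⟩ = 0`), and the compatibility
`⟨g(t), ζ⟩ = ⟨y(t), η⟩` (with `η` playing the role of `A*ζ`), the output `⟨y(t), ζ⟩`
decays as `|⟨y(t),ζ⟩|^(2μ) ≤ |⟨y(0),ζ⟩|^(2μ) - 2μ‖ζ‖² t` and vanishes after
`T₁ = |⟨y(0),ζ⟩|^(2μ)/(2μ‖ζ‖²)`. -/
theorem feedback_drives_scalar_output_to_zero
    {H : Type*} [NormedAddCommGroup H] [InnerProductSpace ℝ H] [CompleteSpace H]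
    (ζ η : H) (hζ : ζ ≠ 0)
    (μ : ℝ) (hμ : μ ∈ Set.Ioo (0:ℝ) (1/2))
    (y : ℝ → H) (g : ℝ → H) (c : ℝ → ℝ)
    (hycont : ContinuousOn y (Set.Ici 0))
    (hg : ∀ t ≥ (0:ℝ), ⟪g t, ζ⟫ = ⟪y t, η⟫)
    (hyderiv : ∀ t > (0:ℝ),
      HasDerivAt y (g t - c t • ζ - ((⟪y t, η⟫ : ℝ) / ‖ζ‖ ^ 2) • ζ) t)
    (hc : ∀ t : ℝ, (⟪y t, ζ⟫ : ℝ) ≠ 0 →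
      c t = (⟪y t, ζ⟫ : ℝ) * |(⟪y t, ζ⟫ : ℝ)| ^ (-(2 * μ)))
    (hc0 : ∀ t : ℝ, (⟪y t, ζ⟫ : ℝ) = 0 → c t = 0) :
    (∀ t : ℝ, 0 ≤ t → t ≤ |(⟪y 0, ζ⟫ : ℝ)| ^ (2 * μ) / (2 * μ * ‖ζ‖ ^ 2) →
      |(⟪y t, ζ⟫ : ℝ)| ^ (2 * μ) ≤ |(⟪y 0, ζ⟫ : ℝ)| ^ (2 * μ) - 2 * μ * ‖ζ‖ ^ 2 * t) ∧
    (∀ t ≥ |(⟪y 0, ζ⟫ : ℝ)| ^ (2 * μ) / (2 * μ * ‖ζ‖ ^ 2), (⟪y t, ζ⟫ : ℝ) = 0) :=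
  feedback_drives_scalar_output_to_zero_general ζ η hζ μ hμ y g c hycont hg hyderiv hc
end
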